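/- arXiv:1505.06234 — 8 statements merged into one kernel-verified Lean document; each statement's English description precedes it below -/
import Mathlib

section
/- For every graph G with path-chromatic number k, there exists an enumeration σ = v_1,...,v_n of V(G) such that the path-decomposition P_σ^G = X_1,...,X_n, where X_ℓ = N[{v_1,...,v_ℓ}] \ {v_1,...,v_{ℓ-1}}, has chromatic number exactly k (i.e., max over ℓ of χ(G[X_ℓ]) = k). -/
open SimpleGraph

universe u
variable {V : Type u}

/-- Closed neighborhood of a vertex set. -/
def closedNbhd (G : SimpleGraph V) (U : Set V) : Set V :=
  U ∪ {v | ∃ u ∈ U, G.Adj u v}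

/-- Bag `X_ℓ = N[{v_1,…,v_ℓ}] \ {v_1,…,v_{ℓ-1}}` of the enumeration `σ`. -/
def bagX {n : ℕ} (G : SimpleGraph V) (σ : Fin n ≃ V) (ℓ : Fin n) : Set V :=
  closedNbhd G {v | ∃ j ≤ ℓ, v = σ j} \ {v | ∃ j < ℓ, v = σ j}

/-- Chromatic number of the subgraph induced by `S`. -/
noncomputable def chrom (G : SimpleGraph V) (S : Set V) : ℕ :=
  sInf {k | (G.induce S).Colorable k}

/-- Chromatic number of the path-decomposition `P_σ^G`. -/
noncomputable def decompChrom {n : ℕ} (G : SimpleGraph V) (σ : Fin n ≃ V) : ℕ :=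
  sInf {k | ∀ ℓ, (G.induce (bagX G σ ℓ)).Colorable k}

/-- `B` is a path-decomposition of `G`. -/
def IsPathDecomp (G : SimpleGraph V) {s : ℕ} (B : Fin s → Set V) : Prop :=
  (∀ v, ∃ t, v ∈ B t) ∧
  (∀ u v, G.Adj u v → ∃ t, u ∈ B t ∧ v ∈ B t) ∧
  (∀ v (t₁ t₂ t₃ : Fin s), t₁ ≤ t₂ → t₂ ≤ t₃ → v ∈ B t₁ → v ∈ B t₃ → v ∈ B t₂)

/-- Path-chromatic number. -/
noncomputable def pathChromatic (G : SimpleGraph V) : ℕ :=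
  sInf {k | ∃ (s : ℕ) (B : Fin s → Set V), IsPathDecomp G B ∧
    ∀ t, (G.induce (B t)).Colorable k}

/-- `(T, B)` is a tree-decomposition of `G`. -/
def IsTreeDecomp {ι : Type u} (G : SimpleGraph V) (T : SimpleGraph ι) (B : ι → Set V) : Prop :=
  T.IsTree ∧
  (∀ v, ∃ t, v ∈ B t) ∧
  (∀ u v, G.Adj u v → ∃ t, u ∈ B t ∧ v ∈ B t) ∧
  (∀ v, (T.induce {t | v ∈ B t}).Connected)

/-- Tree-chromatic number. -/
noncomputable def treeChromatic (G : SimpleGraph V) : ℕ :=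
  sInf {k | ∃ (ι : Type u) (T : SimpleGraph ι) (B : ι → Set V),
    IsTreeDecomp G T B ∧ ∀ t, (G.induce (B t)).Colorable k}

/-- A special enumeration. -/
def IsSpecial {n : ℕ} (G : SimpleGraph V) (σ : Fin n ≃ V) : Prop :=
  decompChrom G σ = pathChromatic G ∧
  ∀ i : Fin n, chrom G (bagX G σ i) = pathChromatic G →
    ∀ j : Fin n, j < i → ¬ G.Adj (σ j) (σ i)

/-- The graph `R_m(G)`; the vertex `(i, none)` plays the role of `(i, v₀)`. -/
def Rm (G : SimpleGraph V) (m : ℕ) : SimpleGraph (Fin m × Option V) :=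
  SimpleGraph.fromRel (fun p q =>
    (p.1 = q.1 ∧ p.2 = none) ∨
    (p.1 ≠ q.1 ∧ ∃ u v, p.2 = some u ∧ q.2 = some v ∧ G.Adj u v))

/-- `[I, U] = { (i, v) : i ∈ I, v ∈ U }` inside `R_m(G)`. -/
def box {m : ℕ} (I : Set (Fin m)) (U : Set V) : Set (Fin m × Option V) :=
  {p | p.1 ∈ I ∧ ∃ v ∈ U, p.2 = some v}

/-- Index of the first vertex in the enumeration `μ` satisfying `P`. -/
noncomputable def firstIdx {N : ℕ} {W : Type*} (μ : Fin N ≃ W) (P : W → Prop) : ℕ :=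
  sInf {ℓ : ℕ | ∃ h : ℓ < N, P (μ ⟨ℓ, h⟩)}

/-- The cycle `C_n`: `v_j ~ v_{j'}` iff `|j - j'| ∈ {1, n-1}`. -/
def cyc (n : ℕ) : SimpleGraph (Fin n) :=
  SimpleGraph.fromRel (fun a b => (b : ℕ) - (a : ℕ) = 1 ∨ (b : ℕ) - (a : ℕ) = n - 1)

/-- The Mycielskian of a graph. -/
def mycielskian (G : SimpleGraph V) : SimpleGraph (Option (V ⊕ V)) :=
  SimpleGraph.fromRel (fun a b =>
    match a, b with
    | some (Sum.inl u), some (Sum.inl v) => G.Adj u v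
    | some (Sum.inr u), some (Sum.inl v) => G.Adj u v
    | none, some (Sum.inr _) => True
    | _, _ => False)

/-- Vertex types and graphs of the Mycielski family: `MycS 2` is a single edge. -/
def MycS : ℕ → Σ W : Type, SimpleGraph W
  | 0 => ⟨Empty, ⊥⟩
  | 1 => ⟨Empty, ⊥⟩
  | 2 => ⟨Fin 2, ⊤⟩
  | (n + 3) => ⟨Option ((MycS (n + 2)).1 ⊕ (MycS (n + 2)).1), mycielskian (MycS (n + 2)).2⟩

/-- The vertex type of the `k`-Mycielski graph. -/
def MycV (k : ℕ) : Type := (MycS k).1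

/-- The `k`-Mycielski graph `M_k`. -/
def Myc (k : ℕ) : SimpleGraph (MycV k) := (MycS k).2

section Aux

variable {V : Type u}

lemma colorable_induce_card [Fintype V] (G : SimpleGraph V) (S : Set V) :
    (G.induce S).Colorable (Fintype.card V) := by
  classical
  refine ⟨SimpleGraph.Coloring.mk (fun v => Fintype.equivFin V v.1) ?_⟩
  intro a b hab h
  exact hab.ne (Subtype.ext ((Fintype.equivFin V).injective h))

lemma colorable_induce_subset (G : SimpleGraph V) {S T : Set V} (h : S ⊆ T) {k : ℕ}
    (hT : (G.induce T).Colorable k) : (G.induce S).Colorable k := by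
  obtain ⟨C⟩ := hT
  exact ⟨SimpleGraph.Coloring.mk (fun v => C ⟨v.1, h v.2⟩) (fun hab => C.valid hab)⟩

lemma mem_bagX_adj {n : ℕ} (G : SimpleGraph V) (σ : Fin n ≃ V) {u v : V}
    (huv : G.Adj u v) (h : σ.symm u ≤ σ.symm v) :
    u ∈ bagX G σ (σ.symm u) ∧ v ∈ bagX G σ (σ.symm u) := by
  constructor
  · refine ⟨Or.inl ⟨σ.symm u, le_refl _, (σ.apply_symm_apply u).symm⟩, ?_⟩
    rintro ⟨j, hj, hvj⟩
    have : σ.symm u = j := by rw [hvj, σ.symm_apply_apply]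
    exact absurd hj (by simp [this])
  · refine ⟨Or.inr ⟨u, ⟨σ.symm u, le_refl _, (σ.apply_symm_apply u).symm⟩, huv⟩, ?_⟩
    rintro ⟨j, hj, hvj⟩
    have : σ.symm v = j := by rw [hvj, σ.symm_apply_apply]
    rw [this] at h
    exact absurd (lt_of_lt_of_le hj h) (lt_irrefl _)

lemma isPathDecomp_bagX {n : ℕ} (G : SimpleGraph V) (σ : Fin n ≃ V) :
    IsPathDecomp G (bagX G σ) := by
  refine ⟨?_, ?_, ?_⟩
  · intro v
    refine ⟨σ.symm v, Or.inl ⟨σ.symm v, le_refl _, (σ.apply_symm_apply v).symm⟩, ?_⟩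
    rintro ⟨j, hj, hvj⟩
    have : σ.symm v = j := by rw [hvj, σ.symm_apply_apply]
    exact absurd hj (by simp [this])
  · intro u v huv
    rcases le_total (σ.symm u) (σ.symm v) with h | h
    · exact ⟨σ.symm u, mem_bagX_adj G σ huv h⟩
    · obtain ⟨h1, h2⟩ := mem_bagX_adj G σ huv.symm h
      exact ⟨σ.symm v, h2, h1⟩
  · intro v t1 t2 t3 h12 h23 h1 h3
    obtain ⟨hc1, hn1⟩ := h1
    obtain ⟨_, hn3⟩ := h3
    constructor
    · rcases hc1 with ⟨j, hj, hvj⟩ | ⟨u, ⟨j, hj, huj⟩, hadj⟩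
      · exact Or.inl ⟨j, le_trans hj h12, hvj⟩
      · exact Or.inr ⟨u, ⟨j, le_trans hj h12, huj⟩, hadj⟩
    · rintro ⟨j, hj, hvj⟩
      exact hn3 ⟨j, lt_of_lt_of_le hj h23, hvj⟩

lemma pathChromatic_set_nonempty [Fintype V] (G : SimpleGraph V) :
    {k | ∃ (s : ℕ) (B : Fin s → Set V), IsPathDecomp G B ∧
      ∀ t, (G.induce (B t)).Colorable k}.Nonempty := by
  refine ⟨Fintype.card V, 1, fun _ => Set.univ, ⟨?_, ?_, ?_⟩, ?_⟩
  · exact fun v => ⟨0, Set.mem_univ v⟩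
  · exact fun u v _ => ⟨0, Set.mem_univ u, Set.mem_univ v⟩
  · exact fun v _ _ _ _ _ _ _ => Set.mem_univ v
  · exact fun t => colorable_induce_card G Set.univ

lemma pathChromatic_le_decompChrom [Fintype V] (G : SimpleGraph V)
    (σ : Fin (Fintype.card V) ≃ V) : pathChromatic G ≤ decompChrom G σ := by
  have hmem : decompChrom G σ ∈
      {k | ∀ ℓ, (G.induce (bagX G σ ℓ)).Colorable k} := by
    apply Nat.sInf_mem
    exact ⟨Fintype.card V, fun ℓ => colorable_induce_card G _⟩
  exact Nat.sInf_le ⟨Fintype.card V, bagX G σ, isPathDecomp_bagX G σ, hmem⟩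

end Aux

/-- If `G` has path-chromatic number `k`, there is an enumeration `σ` of `V(G)` such that
`P_σ^G` has chromatic number `k`. -/
theorem stmt_0 {V : Type u} [Fintype V] (G : SimpleGraph V) (k : ℕ)
    (hG : pathChromatic G = k) :
    ∃ σ : Fin (Fintype.card V) ≃ V, decompChrom G σ = k := by
  classical
  subst hG
  obtain ⟨s, B, hB, hcol⟩ := Nat.sInf_mem (pathChromatic_set_nonempty G)
  obtain ⟨hcover, hedge, hconsec⟩ := hB
  set n := Fintype.card V with hn
  let e : Fin n ≃ V := (Fintype.equivFin V).symm
  have hgne : ∀ v : V, (Finset.univ.filter fun t => v ∈ B t).Nonempty := by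
    intro v
    obtain ⟨t, ht⟩ := hcover v
    exact ⟨t, by simp [ht]⟩
  let g : V → Fin s := fun v => (Finset.univ.filter fun t => v ∈ B t).max' (hgne v)
  have hgmem : ∀ v, v ∈ B (g v) := by
    intro v
    have := Finset.max'_mem _ (hgne v)
    simpa using this
  have hgle : ∀ v t, v ∈ B t → t ≤ g v := by
    intro v t ht
    exact Finset.le_max' _ t (by simp [ht])
  let π := Tuple.sort (g ∘ e)
  let σ : Fin n ≃ V := (π : Fin n ≃ Fin n).trans e
  have hmono : Monotone (g ∘ e ∘ π) := Tuple.monotone_sort (g ∘ e)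
  have hmonoσ : ∀ i j : Fin n, i ≤ j → g (σ i) ≤ g (σ j) := by
    intro i j hij
    exact hmono hij
  have hsub : ∀ ℓ : Fin n, bagX G σ ℓ ⊆ B (g (σ ℓ)) := by
    intro ℓ v hv
    obtain ⟨hc, hnot⟩ := hv
    have hℓi : ℓ ≤ σ.symm v := by
      by_contra hlt
      exact hnot ⟨σ.symm v, lt_of_not_ge hlt, (σ.apply_symm_apply v).symm⟩
    have hgv : g (σ ℓ) ≤ g v := by
      have := hmonoσ ℓ (σ.symm v) hℓi
      rwa [σ.apply_symm_apply] at this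
    rcases hc with ⟨j, hj, hvj⟩ | ⟨u, ⟨j, hj, huj⟩, hadj⟩
    · have hji : σ.symm v = j := by rw [hvj, σ.symm_apply_apply]
      have : ℓ = j := le_antisymm (hji ▸ hℓi) hj
      rw [hvj, ← this]
      exact hgmem (σ ℓ)
    · obtain ⟨t', hut', hvt'⟩ := hedge u v hadj
      have h1 : t' ≤ g (σ ℓ) := by
        have hu : t' ≤ g u := hgle u t' hut'
        calc t' ≤ g u := hu
          _ = g (σ j) := by rw [huj]
          _ ≤ g (σ ℓ) := hmonoσ j ℓ hj
      exact hconsec v t' (g (σ ℓ)) (g v) h1 hgv hvt' (hgmem v)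
  have hub : decompChrom G σ ≤ pathChromatic G := by
    apply Nat.sInf_le
    intro ℓ
    exact colorable_induce_subset G (hsub ℓ) (hcol (g (σ ℓ)))
  exact ⟨σ, le_antisymm hub (pathChromatic_le_decompChrom G σ)⟩
end

section
/- Let G be a graph, I ⊆ [m], U ⊆ V(G) with |I| ≥ χ(G[U]), i* ∈ [m] \ I, and v* ∈ V(G) \ U. Then the subgraph of R_m(G) induced by ([I,U]) ∪ {(i*,v*)} contains an isomorphic copy of the subgraph of G induced by U ∪ {v*} as an induced subgraph. -/
open SimpleGraph

universe u
variable {V : Type u}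

/-! Colour `G[U]` properly with colours from `I` and give `v*` the colour `i* ∉ I`. Then
`v ↦ (colour of v, v)` is an induced embedding into `R_m(G)`: two such vertices are adjacent
iff their colours differ and they are adjacent in `G`, and adjacent vertices have different
colours. -/

namespace SimpleGraph

variable {W α : Type*}

theorem colorable_chrom (G : SimpleGraph V) (S : Set V) [Finite S] :
    (G.induce S).Colorable (chrom G S) := by
  have := Fintype.ofFinite ↥S
  exact Nat.sInf_mem (s := {k | (G.induce S).Colorable k}) ⟨_, (G.induce S).colorable_of_fintype⟩

theorem Colorable.exists_coloring_mem {H : SimpleGraph W} {k : ℕ} (hH : H.Colorable k)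
    {I : Set α} (hI : I.Finite) (hk : k ≤ I.ncard) : ∃ C : H.Coloring α, ∀ w, C w ∈ I := by
  have := hI.fintype
  obtain ⟨c⟩ := hH
  obtain ⟨f⟩ : Nonempty (Fin k ↪ I) := Function.Embedding.nonempty_of_card_le
    (by rwa [Fintype.card_fin, ← Nat.card_eq_fintype_card, Nat.card_coe_set_eq])
  exact ⟨recolorOfEmbedding H (f.trans (Function.Embedding.subtype _)) c, fun w => (f (c w)).2⟩

theorem Coloring.exists_extend_insert {G : SimpleGraph V} {U : Set V}
    (C : (G.induce U).Coloring α) {v : V} (hv : v ∉ U) {a : α} (ha : a ∉ Set.range C) :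
    ∃ C' : (G.induce (insert v U)).Coloring α,
      C' ⟨v, Set.mem_insert v U⟩ = a ∧
      ∀ u (hu : u ∈ U), C' ⟨u, Set.mem_insert_of_mem v hu⟩ = C ⟨u, hu⟩ := by
  classical
  let color (x : ↥(insert v U)) : α := if hx : x.1 ∈ U then C ⟨x, hx⟩ else a
  have color_of_not_mem (x : ↥(insert v U)) (hx : x.1 ∉ U) : x.1 = v :=
    (Set.mem_insert_iff.mp x.2).resolve_right hx
  refine ⟨Coloring.mk color fun {x y} hxy => ?_, dif_neg hv, fun u hu => dif_pos hu⟩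
  by_cases hx : x.1 ∈ U <;> by_cases hy : y.1 ∈ U <;>
    simp only [color, hx, hy, dite_true, dite_false]
  · exact C.valid (show (G.induce U).Adj ⟨x, hx⟩ ⟨y, hy⟩ from hxy)
  · exact fun h => ha ⟨_, h⟩
  · exact fun h => ha ⟨_, h.symm⟩
  · exact absurd hxy (by simp [comap_adj, color_of_not_mem x hx, color_of_not_mem y hy])

theorem Rm_adj_some {G : SimpleGraph V} {m : ℕ} {i j : Fin m} {u w : V} :
    (Rm G m).Adj (i, some u) (j, some w) ↔ i ≠ j ∧ G.Adj u w := by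
  simp only [Rm, fromRel_adj, ne_eq, Prod.mk.injEq, reduceCtorEq, and_false, false_or,
    Option.some.injEq, exists_and_left, exists_eq_left']
  rw [G.adj_comm w u, eq_comm (a := j), or_self]
  exact ⟨And.right, fun h => ⟨fun e => h.1 e.1, h⟩⟩

def embeddingRmOfColoring {G : SimpleGraph V} {m : ℕ} {H : SimpleGraph W} (φ : H ↪g G)
    (C : H.Coloring (Fin m)) : H ↪g Rm G m where
  toFun w := (C w, some (φ w))
  inj' _ _ h := φ.injective (Option.some_injective _ (Prod.ext_iff.mp h).2)
  map_rel_iff' {x y} := by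
    change (Rm G m).Adj (C x, some (φ x)) (C y, some (φ y)) ↔ H.Adj x y
    rw [Rm_adj_some, φ.map_adj_iff]
    exact ⟨And.right, fun h => ⟨C.valid h, h⟩⟩

end SimpleGraph

/-- If `|I| ≥ χ(G[U])`, `i* ∉ I` and `v* ∉ U`, then `⟨[I,U] ∪ {(i*,v*)}⟩` contains an
isomorphic copy of `⟨U ∪ {v*}⟩` as an induced subgraph. -/
theorem stmt_4 {V : Type u} [Fintype V] (G : SimpleGraph V) {m : ℕ}
    (I : Set (Fin m)) (U : Set V) (hI : chrom G U ≤ I.ncard)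
    (istar : Fin m) (hi : istar ∉ I) (vstar : V) (hv : vstar ∉ U) :
    Nonempty ((G.induce (insert vstar U)) ↪g
      ((Rm G m).induce (insert (istar, some vstar) (box I U)))) := by
  obtain ⟨C, hCI⟩ := (colorable_chrom G U).exists_coloring_mem I.toFinite hI
  obtain ⟨C', hC'v, hC'U⟩ :=
    C.exists_extend_insert hv (a := istar) fun ⟨w, hw⟩ => hi (hw ▸ hCI w)
  let e := embeddingRmOfColoring (Embedding.induce _) C'
  have hrange : Set.range e ⊆ insert (istar, some vstar) (box I U) := by
    rintro _ ⟨⟨x, rfl | hx⟩, rfl⟩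
    · exact Or.inl (by simp [e, embeddingRmOfColoring, hC'v])
    · exact Or.inr ⟨by simpa [e, embeddingRmOfColoring, hC'U x hx] using hCI _, x, hx, rfl⟩
  exact ⟨(induceHomOfLE _ hrange).comp e.isoInduceRange.toEmbedding⟩
end

section
/- Let G be a graph, I ⊆ [m], U ⊆ V(G) with χ(G[U]) = c and |I| > c. Then for every proper c-coloring C of the subgraph of R_m(G) induced by [I,U] and every i ∈ I, the set of colors appearing on [{i},U] is all c colors, i.e., C([{i},U]) = [c]. -/
open SimpleGraph

universe u
variable {V : Type u}

/-- If `χ(G[U]) = c` and `|I| > c`, then every proper `c`-coloring of `⟨[I,U]⟩` uses all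
`c` colors on `[{i},U]`, for every `i ∈ I`. -/
theorem stmt_6 {V : Type u} [Fintype V] (G : SimpleGraph V) {m : ℕ}
    (I : Set (Fin m)) (U : Set V) (c : ℕ) (hc : chrom G U = c) (hI : c < I.ncard)
    (C : ((Rm G m).induce (box I U)).Coloring (Fin c)) (i : Fin m) (hi : i ∈ I)
    (col : Fin c) :
    ∃ p : box I U, (p : Fin m × Option V).1 = i ∧ C p = col := by
  classical
  by_contra hcon
  push_neg at hcon
  -- the vertex (i', u) of the box
  let pe : ↥I → ↥U → ↥(box I U) := fun i' u =>
    ⟨(i'.1, some u.1), i'.2, u.1, u.2, rfl⟩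
  have hrow : ∀ u : ↥U, C (pe ⟨i, hi⟩ u) ≠ col := fun u => hcon _ rfl
  -- adjacency across distinct rows
  have cross : ∀ (i1 i2 : ↥I) (u v : ↥U), i1 ≠ i2 → G.Adj u.1 v.1 →
      C (pe i1 u) ≠ C (pe i2 v) := by
    intro i1 i2 u v h12 hadj
    apply C.valid
    have hne : (i1.1, some u.1) ≠ (i2.1, some v.1) := by
      intro h
      exact h12 (Subtype.ext (congrArg Prod.fst h))
    show (Rm G m).Adj (i1.1, some u.1) (i2.1, some v.1)
    rw [Rm, SimpleGraph.fromRel_adj]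
    refine ⟨hne, Or.inl (Or.inr ⟨fun h => h12 (Subtype.ext h), u.1, v.1, rfl, rfl, hadj⟩)⟩
  have clash : ∀ (u v : ↥U), G.Adj u.1 v.1 → ∀ (a : Fin c) (i1 i2 i3 : ↥I),
      i1 ≠ i2 → C (pe i1 u) = a → C (pe i2 u) = a → C (pe i3 v) = a → False := by
    intro u v hadj a i1 i2 i3 h12 h1 h2 h3
    by_cases h : i1 = i3
    · exact cross i2 i3 u v (fun e => h12 (e.trans h.symm).symm)
        hadj (h2.trans h3.symm)
    · exact cross i1 i3 u v h hadj (h1.trans h3.symm)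
  -- pigeonhole: some color repeats on every column
  have hcard : Fintype.card (Fin c) < Fintype.card ↥I := by
    rw [Fintype.card_fin]
    rwa [Set.ncard_eq_toFinset_card' I, Set.toFinset_card] at hI
  have pigeon : ∀ u : ↥U, ∃ i1 i2 : ↥I, i1 ≠ i2 ∧ C (pe i1 u) = C (pe i2 u) := by
    intro u
    obtain ⟨i1, i2, hne, heq⟩ :=
      Fintype.exists_ne_map_eq_of_card_lt (fun i' : ↥I => C (pe i' u)) hcard
    exact ⟨i1, i2, hne, heq⟩
  set P : ↥U → Fin c → Prop := fun u a => a ≠ col ∧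
    ∃ i1 i2 : ↥I, i1 ≠ i2 ∧ C (pe i1 u) = a ∧ C (pe i2 u) = a with hP
  set f : ↥U → Fin c := fun u =>
    if h : ∃ a, P u a then h.choose else C (pe ⟨i, hi⟩ u) with hf
  have hfcol : ∀ u, f u ≠ col := by
    intro u
    rw [hf]
    by_cases h : ∃ a, P u a
    · simp only [dif_pos h]; exact h.choose_spec.1
    · simp only [dif_neg h]; exact hrow u
  have hElse : ∀ u : ↥U, (¬ ∃ a, P u a) →
      ∃ i1 i2 : ↥I, i1 ≠ i2 ∧ C (pe i1 u) = col ∧ C (pe i2 u) = col := by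
    intro u h
    obtain ⟨i1, i2, hne, heq⟩ := pigeon u
    by_cases ha : C (pe i1 u) = col
    · exact ⟨i1, i2, hne, ha, heq ▸ ha⟩
    · exact absurd ⟨C (pe i1 u), ha, i1, i2, hne, rfl, heq.symm⟩ h
  have hproper : ∀ u v : ↥U, G.Adj u.1 v.1 → f u ≠ f v := by
    intro u v hadj heq
    by_cases hu : ∃ a, P u a <;> by_cases hv : ∃ a, P v a
    · obtain ⟨_, i1, i2, h12, h1, h2⟩ := hu.choose_spec
      obtain ⟨_, i3, _, _, h3, _⟩ := hv.choose_spec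
      have hfu : f u = hu.choose := by rw [hf]; simp only [dif_pos hu]
      have hfv : f v = hv.choose := by rw [hf]; simp only [dif_pos hv]
      exact clash u v hadj (f u) i1 i2 i3 h12 (h1.trans hfu.symm) (h2.trans hfu.symm)
        (h3.trans (hfv.symm.trans heq.symm))
    · obtain ⟨_, i1, i2, h12, h1, h2⟩ := hu.choose_spec
      have hfu : f u = hu.choose := by rw [hf]; simp only [dif_pos hu]
      have hfv : f v = C (pe ⟨i, hi⟩ v) := by rw [hf]; simp only [dif_neg hv]
      exact clash u v hadj (f u) i1 i2 ⟨i, hi⟩ h12 (h1.trans hfu.symm) (h2.trans hfu.symm)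
        (hfv.symm.trans heq.symm)
    · obtain ⟨_, i1, i2, h12, h1, h2⟩ := hv.choose_spec
      have hfv : f v = hv.choose := by rw [hf]; simp only [dif_pos hv]
      have hfu : f u = C (pe ⟨i, hi⟩ u) := by rw [hf]; simp only [dif_neg hu]
      exact clash v u hadj.symm (f v) i1 i2 ⟨i, hi⟩ h12 (h1.trans hfv.symm) (h2.trans hfv.symm)
        (hfu.symm.trans heq)
    · obtain ⟨i1, i2, h12, h1, h2⟩ := hElse u hu
      obtain ⟨i3, _, _, h3, _⟩ := hElse v hv
      exact clash u v hadj col i1 i2 i3 h12 h1 h2 h3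
  -- build a (c-1)-coloring of G[U], contradiction with chrom = c
  have hc1 : 0 < c := col.pos
  obtain ⟨d, rfl⟩ : ∃ d, c = d + 1 := ⟨c - 1, (Nat.succ_pred_eq_of_pos hc1).symm⟩
  have hsome : ∀ u : ↥U, (finSuccEquiv' col (f u)).isSome := by
    intro u
    rw [Option.isSome_iff_ne_none]
    intro h
    have : finSuccEquiv' col (f u) = finSuccEquiv' col col := by
      rw [h, finSuccEquiv'_at]
    exact hfcol u ((finSuccEquiv' col).injective this)
  let g : ↥U → Fin d := fun u => ((finSuccEquiv' col) (f u)).get (hsome u)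
  have hcolorable : (G.induce U).Colorable d := by
    refine ⟨SimpleGraph.Coloring.mk g ?_⟩
    intro u v huv hgeq
    have hadj : G.Adj u.1 v.1 := huv
    have : finSuccEquiv' col (f u) = finSuccEquiv' col (f v) := by
      rw [← Option.some_get (hsome u), ← Option.some_get (hsome v)]
      exact congrArg some hgeq
    exact hproper u v hadj ((finSuccEquiv' col).injective this)
  have : chrom G U ≤ d := Nat.sInf_le hcolorable
  omega
end

section
/- Let G be a graph on n vertices, m ≥ n+1, and let μ be an enumeration of the vertices of R_m(G) such that the chromatic number of the path-decomposition P_μ^{R_m(G)} is k. For each v ∈ V(G) let t(v) be the first vertex of [m] × {v} in μ, and suppose the vertices of G are labeled v_1,...,v_n so that t(v_j) precedes t(v_{j'}) in μ whenever j < j'. Let σ = v_1,...,v_n and P_σ^G = X_1,...,X_n. Then the chromatic number of P_σ^G is at most k. -/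
open SimpleGraph

universe u
variable {V : Type u}

/-- Lemma 6 (1): with `m ≥ n + 1` and `μ` an enumeration of `R_m(G)` whose path-decomposition
has chromatic number `k`, if the vertices of `G` are ordered by first appearance of their
copies in `μ`, then `P_σ^G` has chromatic number at most `k`. -/
theorem stmt_8 {V : Type u} [Fintype V] (G : SimpleGraph V) {n m k : ℕ}
    (hn : Fintype.card V = n) (hm : n + 1 ≤ m)
    (μ : Fin (m * (n + 1)) ≃ (Fin m × Option V))
    (hk : decompChrom (Rm G m) μ = k) (σ : Fin n ≃ V)
    (horder : ∀ j j' : Fin n, j < j' →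
      firstIdx μ (fun p => p.2 = some (σ j)) < firstIdx μ (fun p => p.2 = some (σ j'))) :
    decompChrom G σ ≤ k := by
  classical
  -- Every bag of the μ-decomposition of Rm G m is k-colorable.
  have hbags : ∀ t, ((Rm G m).induce (bagX (Rm G m) μ t)).Colorable k := by
    have hne : {k' | ∀ t, ((Rm G m).induce (bagX (Rm G m) μ t)).Colorable k'}.Nonempty := by
      refine ⟨Fintype.card (Fin m × Option V), fun t => ?_⟩
      exact ((Rm G m).induce (bagX (Rm G m) μ t)).colorable_of_fintype.mono
        (Fintype.card_le_of_injective _ Subtype.val_injective)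
    rw [← hk]
    exact Nat.sInf_mem hne
  -- reduce to colorability of every bag of σ
  refine Nat.sInf_le ?_
  intro ℓ
  have hn1 : 1 ≤ n := by
    rcases Nat.eq_zero_or_pos n with h0 | h; · exact absurd (h0 ▸ ℓ).isLt (by omega)
    · exact h
  -- first indices
  have hfirst : ∀ j : Fin n, ∃ h : firstIdx μ (fun p => p.2 = some (σ j)) < m * (n + 1),
      (μ ⟨firstIdx μ (fun p => p.2 = some (σ j)), h⟩).2 = some (σ j) := by
    intro j
    have hmpos : 0 < m := by omega
    have : {s : ℕ | ∃ h : s < m * (n + 1), (μ ⟨s, h⟩).2 = some (σ j)}.Nonempty := by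
      refine ⟨(μ.symm (⟨0, hmpos⟩, some (σ j)) : Fin (m * (n + 1))), (μ.symm _).isLt, ?_⟩
      simp
    exact Nat.sInf_mem this
  have hmin : ∀ (j : Fin n) (s : Fin (m * (n + 1))),
      (s : ℕ) < firstIdx μ (fun p => p.2 = some (σ j)) → (μ s).2 ≠ some (σ j) := by
    intro j s hs hcon
    have hle : firstIdx μ (fun p => p.2 = some (σ j)) ≤ (s : ℕ) :=
      Nat.sInf_le ⟨s.isLt, by simpa using hcon⟩
    omega
  obtain ⟨ht, hμt⟩ := hfirst ℓ
  set t : Fin (m * (n + 1)) := ⟨firstIdx μ (fun p => p.2 = some (σ ℓ)), ht⟩ with htdef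
  have htval : (t : ℕ) = firstIdx μ (fun p => p.2 = some (σ ℓ)) := rfl
  -- no copy of a "late" vertex appears strictly before t
  have hlate : ∀ u : V, ℓ ≤ σ.symm u → ∀ s : Fin (m * (n + 1)), s < t → (μ s).2 ≠ some u := by
    intro u hu s hst
    have hu' : σ (σ.symm u) = u := σ.apply_symm_apply u
    have hst' : (s : ℕ) < (t : ℕ) := hst
    rcases lt_or_eq_of_le hu with hlt | heq
    · have hord := horder ℓ (σ.symm u) hlt
      have : (s : ℕ) < firstIdx μ (fun p => p.2 = some (σ (σ.symm u))) := by omega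
      simpa [hu'] using hmin (σ.symm u) s this
    · have : (s : ℕ) < firstIdx μ (fun p => p.2 = some (σ (σ.symm u))) := by
        rw [← heq]; omega
      simpa [hu'] using hmin (σ.symm u) s this
  set Xset : Set V := bagX G σ ℓ with hXdef
  set Bag : Set (Fin m × Option V) := bagX (Rm (V := V) G m) μ t with hBdef
  -- elements of Xset are late
  have hXlate : ∀ u ∈ Xset, ℓ ≤ σ.symm u := by
    intro u hu
    by_contra hcon
    push_neg at hcon
    exact hu.2 ⟨σ.symm u, hcon, (σ.apply_symm_apply u).symm⟩
  -- structure of Xset elements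
  have hXstruct : ∀ u ∈ Xset, u = σ ℓ ∨ ∃ j : Fin n, j ≤ ℓ ∧ G.Adj (σ j) u := by
    intro u hu
    rcases hu.1 with ⟨j, hj, rfl⟩ | ⟨w, ⟨j, hj, rfl⟩, hadj⟩
    · left
      rcases lt_or_eq_of_le hj with h | h
      · exact absurd ⟨j, h, rfl⟩ hu.2
      · rw [h]
    · exact Or.inr ⟨j, hj, hadj⟩
  -- the key membership fact
  have hforb : ∀ u : ↥Xset, ∃ i₁ : Fin m, ∀ i : Fin m,
      (if (u : V) = σ ℓ then i = i₁ else i ≠ i₁) → (i, some (u : V)) ∈ Bag := by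
    rintro ⟨u, hu⟩
    by_cases hcase : u = σ ℓ
    · refine ⟨(μ t).1, fun i hi => ?_⟩
      rw [if_pos hcase] at hi
      have hmt : ((i, some u) : Fin m × Option V) = μ t := by
        subst hi
        rw [show (some u : Option V) = (μ t).2 from by simp [hμt, hcase]]
      refine ⟨Or.inl ⟨t, le_refl t, hmt⟩, ?_⟩
      rintro ⟨s, hs, heq⟩
      exact absurd (μ.injective ((heq.symm.trans hmt).symm)) (Fin.ne_of_lt hs).symm
    · obtain ⟨j, hj, hadj⟩ := (hXstruct u hu).resolve_left hcase
      obtain ⟨hj', hμj⟩ := hfirst j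
      set s₀ : Fin (m * (n + 1)) := ⟨firstIdx μ (fun p => p.2 = some (σ j)), hj'⟩ with hs₀def
      have hnat : firstIdx μ (fun p => p.2 = some (σ j)) ≤
          firstIdx μ (fun p => p.2 = some (σ ℓ)) := by
        rcases lt_or_eq_of_le hj with h | h
        · exact le_of_lt (horder j ℓ h)
        · rw [h]
      have hs₀t : s₀ ≤ t := by
        rw [hs₀def, htdef]; exact Fin.mk_le_mk.mpr hnat
      refine ⟨(μ s₀).1, fun i hi => ?_⟩
      rw [if_neg hcase] at hi
      refine ⟨?_, ?_⟩
      · refine Or.inr ⟨μ s₀, ⟨s₀, hs₀t, rfl⟩, ?_⟩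
        have hμs₀ : μ s₀ = ((μ s₀).1, some (σ j)) := Prod.ext rfl hμj
        rw [hμs₀]
        exact ⟨fun hcon => hi (congrArg Prod.fst hcon).symm,
          Or.inl (Or.inr ⟨Ne.symm hi, σ j, u, rfl, rfl, hadj⟩)⟩
      · rintro ⟨s, hs, heq⟩
        exact hlate u (hXlate u hu) s hs (by rw [← heq])
  choose forb hforbspec using hforb
  -- Hall's theorem: pick injective rows
  set S : ↥Xset → Finset (Fin m) := fun u =>
    if (u : V) = σ ℓ then {forb u} else Finset.univ \ {forb u} with hSdef
  have hHall : ∀ A : Finset ↥Xset, A.card ≤ (A.biUnion S).card := by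
    intro A
    by_cases hA : ∃ u ∈ A, (u : V) ≠ σ ℓ
    · obtain ⟨u, huA, huv⟩ := hA
      have hsub : Finset.univ \ {forb u} ⊆ A.biUnion S := by
        intro i hi
        refine Finset.mem_biUnion.mpr ⟨u, huA, ?_⟩
        simp only [hSdef]
        simpa [huv] using hi
      have hc1 : (Finset.univ \ ({forb u} : Finset (Fin m))).card = m - 1 := by
        rw [Finset.card_sdiff_of_subset (Finset.subset_univ _)]
        simp
      have hc2 : A.card ≤ n := by
        calc A.card ≤ Fintype.card ↥Xset := Finset.card_le_univ A
          _ ≤ Fintype.card V := Fintype.card_le_of_injective _ Subtype.val_injective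
          _ = n := hn
      calc A.card ≤ n := hc2
        _ ≤ m - 1 := by omega
        _ = (Finset.univ \ ({forb u} : Finset (Fin m))).card := hc1.symm
        _ ≤ (A.biUnion S).card := Finset.card_le_card hsub
    · push_neg at hA
      have hcard : A.card ≤ 1 := Finset.card_le_one.mpr
        (fun a ha b hb => Subtype.ext ((hA a ha).trans (hA b hb).symm))
      rcases Finset.eq_empty_or_nonempty A with rfl | ⟨u, hu⟩
      · simp
      · have hmem : forb u ∈ A.biUnion S := Finset.mem_biUnion.mpr ⟨u, hu, by
          simp only [hSdef]; simp [hA u hu]⟩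
        have := Finset.card_pos.mpr ⟨forb u, hmem⟩
        omega
  obtain ⟨r, hrinj, hrmem⟩ := (Finset.all_card_le_biUnion_card_iff_exists_injective S).mp hHall
  -- each chosen copy lies in the bag
  have hrBag : ∀ u : ↥Xset, (r u, some (u : V)) ∈ Bag := by
    intro u
    have hm' : r u ∈ (if (u : V) = σ ℓ then ({forb u} : Finset (Fin m))
        else Finset.univ \ {forb u}) := hrmem u
    by_cases hcase : (u : V) = σ ℓ
    · rw [if_pos hcase] at hm'
      exact hforbspec u (r u) (by rw [if_pos hcase]; exact Finset.mem_singleton.mp hm')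
    · rw [if_neg hcase] at hm'
      exact hforbspec u (r u) (by
        rw [if_neg hcase]
        exact (Finset.mem_sdiff.mp hm').2 ∘ Finset.mem_singleton.mpr)
  -- build the graph homomorphism
  have hhom : (G.induce Xset) →g ((Rm (V := V) G m).induce Bag) := by
    refine ⟨fun u => ⟨(r u, some (u : V)), hrBag u⟩, ?_⟩
    intro a b hab
    have hadj : G.Adj (a : V) (b : V) := hab
    have hne : (a : V) ≠ (b : V) := hadj.ne
    have hane : a ≠ b := fun h => hne (congrArg _ h)
    have hrne : r a ≠ r b := fun h => hane (hrinj h)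
    show (Rm G m).Adj (r a, some (a : V)) (r b, some (b : V))
    exact ⟨fun hcon => hrne (congrArg Prod.fst hcon),
      Or.inl (Or.inr ⟨hrne, (a : V), (b : V), rfl, rfl, hadj⟩)⟩
  obtain ⟨c⟩ := hbags t
  exact ⟨c.comp hhom⟩
end

section
/- Let G be a graph on n vertices, m ≥ n+1, and μ an enumeration of the vertices of R_m(G) whose path-decomposition P_μ^{R_m(G)} has chromatic number k. With t(v), σ = v_1,...,v_n and X_1,...,X_n as above (t(v_j) preceding t(v_{j'}) for j < j'), if χ(G[X_ℓ]) = k for some ℓ ∈ [n], then the initial segment of μ up to and including t(v_ℓ) contains at most k vertices of the form (i, v_0). -/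
open SimpleGraph

universe u
variable {V : Type u}

/-- Lemma 6 (2): in the situation of (1), if `χ(X_ℓ) = k` then the initial segment of `μ`
up to and including `t(v_ℓ)` contains at most `k` vertices of the form `(i, v₀)`. -/
theorem stmt_9 {V : Type u} [Fintype V] (G : SimpleGraph V) {n m k : ℕ}
    (hn : Fintype.card V = n) (hm : n + 1 ≤ m)
    (μ : Fin (m * (n + 1)) ≃ (Fin m × Option V))
    (hk : decompChrom (Rm G m) μ = k) (σ : Fin n ≃ V)
    (horder : ∀ j j' : Fin n, j < j' →
      firstIdx μ (fun p => p.2 = some (σ j)) < firstIdx μ (fun p => p.2 = some (σ j')))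
    (ℓ : Fin n) (hX : chrom G (bagX G σ ℓ) = k) :
    Set.ncard {i : Fin (m * (n + 1)) |
      (i : ℕ) ≤ firstIdx μ (fun p => p.2 = some (σ ℓ)) ∧ (μ i).2 = none} ≤ k := by
  classical
  by_contra hq
  push_neg at hq
  set t := firstIdx μ (fun p => p.2 = some (σ ℓ)) with htdef
  set S : Set (Fin (m * (n + 1))) := {i | (i : ℕ) ≤ t ∧ (μ i).2 = none} with hSdef
  have hm0 : 0 < m := by omega
  have hfi_eq : ∀ w : V, firstIdx μ (fun p => p.2 = some w) =
      sInf {s : ℕ | ∃ h : s < m * (n + 1), (μ ⟨s, h⟩).2 = some w} := fun w => rfl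
  -- basic facts about `k`
  have hXmem : σ ℓ ∈ bagX G σ ℓ := by
    constructor
    · exact Or.inl ⟨ℓ, le_refl ℓ, rfl⟩
    · rintro ⟨j, hj, hje⟩
      exact absurd (σ.injective hje) (ne_of_gt hj)
  have hk1 : 1 ≤ k := by
    by_contra hk0
    have hk0' : k = 0 := by omega
    have hne : {k' | (G.induce (bagX G σ ℓ)).Colorable k'}.Nonempty := by
      letI : Fintype ↥(bagX G σ ℓ) := (Set.toFinite _).fintype
      exact ⟨_, (G.induce (bagX G σ ℓ)).colorable_of_fintype⟩
    have hmem := Nat.sInf_mem hne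
    rw [show sInf {k' | (G.induce (bagX G σ ℓ)).Colorable k'} = k from hX, hk0'] at hmem
    obtain ⟨C⟩ := hmem
    exact (C ⟨σ ℓ, hXmem⟩).elim0
  have hnotcol : ¬ (G.induce (bagX G σ ℓ)).Colorable (k - 1) := by
    intro h
    have hle : chrom G (bagX G σ ℓ) ≤ k - 1 := Nat.sInf_le h
    rw [hX] at hle
    omega
  -- facts about `t`
  have htmin : ∀ s : Fin (m * (n + 1)), (s : ℕ) < t → (μ s).2 ≠ some (σ ℓ) := by
    intro s hs hc
    have hmem : (s : ℕ) ∈ {s' : ℕ | ∃ h : s' < m * (n + 1), (μ ⟨s', h⟩).2 = some (σ ℓ)} :=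
      ⟨s.isLt, by rwa [Fin.eta]⟩
    have hle := Nat.sInf_le hmem
    rw [← hfi_eq (σ ℓ), ← htdef] at hle
    omega
  have hCL : ∀ j : Fin (m * (n + 1)), (j : ℕ) < t → ∀ u : V, (μ j).2 = some u →
      ∃ j₀ : Fin n, j₀ < ℓ ∧ u = σ j₀ := by
    intro j hj u hu
    refine ⟨σ.symm u, ?_, (σ.apply_symm_apply u).symm⟩
    rcases lt_trichotomy (σ.symm u) ℓ with h | h | h
    · exact h
    · exfalso
      apply htmin j hj
      rw [hu, ← h, Equiv.apply_symm_apply]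
    · exfalso
      have h1 := horder ℓ (σ.symm u) h
      rw [← htdef] at h1
      have h2 : firstIdx μ (fun p => p.2 = some (σ (σ.symm u))) ≤ (j : ℕ) := by
        rw [hfi_eq]
        exact Nat.sInf_le ⟨j.isLt, by rw [Fin.eta, hu, Equiv.apply_symm_apply]⟩
      omega
  -- the finite set `S` and its maximum `sM`
  have hSfin : S.Finite := Set.toFinite S
  have hScard : hSfin.toFinset.card = S.ncard := (Set.ncard_eq_toFinset_card S hSfin).symm
  have hSfne : hSfin.toFinset.Nonempty := Finset.card_pos.mp (by omega)
  set sM : Fin (m * (n + 1)) := hSfin.toFinset.max' hSfne with hsM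
  have hsMS : sM ∈ S := hSfin.mem_toFinset.mp (hSfin.toFinset.max'_mem hSfne)
  have hsMle : ∀ i, i ∈ S → i ≤ sM := fun i hi => hSfin.toFinset.le_max' i (hSfin.mem_toFinset.mpr hi)
  have hsMnone : (μ sM).2 = none := hsMS.2
  -- the bag at `sM` and a `k`-coloring of it
  set Xs : Set (Fin m × Option V) := bagX (Rm G m) μ sM with hXs
  letI : Fintype ↥Xs := (Set.toFinite _).fintype
  have hcolor : ((Rm G m).induce Xs).Colorable k := by
    have hAne : {k' | ∀ i, ((Rm G m).induce (bagX (Rm G m) μ i)).Colorable k'}.Nonempty := by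
      refine ⟨Fintype.card (Fin m × Option V), fun i => ?_⟩
      letI : Fintype ↥(bagX (Rm G m) μ i) := (Set.toFinite _).fintype
      exact ((Rm G m).induce _).colorable_of_fintype.mono
        (Fintype.card_le_of_embedding (Function.Embedding.subtype _))
    have hmem := Nat.sInf_mem hAne
    rw [show sInf {k' | ∀ i, ((Rm G m).induce (bagX (Rm G m) μ i)).Colorable k'} = k from hk]
      at hmem
    exact hmem sM
  obtain ⟨c⟩ := hcolor
  -- membership lemmas
  have hapex : (μ sM) ∈ Xs := by
    rw [hXs]
    refine ⟨Or.inl ⟨sM, le_refl _, rfl⟩, ?_⟩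
    rintro ⟨j, hj, hje⟩
    exact absurd (μ.injective hje) (ne_of_gt hj)
  have hvertmem : ∀ i : Fin (m * (n + 1)), i ∈ S → ∀ u : V, u ∈ bagX G σ ℓ →
      ((μ i).1, some u) ∈ Xs := by
    intro i hi u hu
    rw [hXs]
    constructor
    · refine Or.inr ⟨μ i, ⟨i, hsMle i hi, rfl⟩, ?_⟩
      rw [Rm, SimpleGraph.fromRel_adj]
      refine ⟨?_, Or.inl (Or.inl ⟨rfl, hi.2⟩)⟩
      intro hcon
      have h2 := congrArg Prod.snd hcon
      simp [hi.2] at h2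
    · rintro ⟨j, hj, hje⟩
      have hj2 : (μ j).2 = some u := by rw [← hje]
      have hjlt : (j : ℕ) < (sM : ℕ) := hj
      have hjt : (j : ℕ) < t := lt_of_lt_of_le hjlt hsMS.1
      obtain ⟨j₀, hj₀, hju⟩ := hCL j hjt u hj2
      exact hu.2 ⟨j₀, hj₀, hju⟩
  -- the color functions
  set colAt : Fin (m * (n + 1)) → V → Fin k := fun i u =>
    if h : ((μ i).1, some u) ∈ Xs then c ⟨((μ i).1, some u), h⟩ else ⟨0, hk1⟩ with hcolAtdef
  have hcolAt : ∀ (i : Fin (m * (n + 1))) (hi : i ∈ S) (u : V) (hu : u ∈ bagX G σ ℓ),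
      colAt i u = c ⟨((μ i).1, some u), hvertmem i hi u hu⟩ := by
    intro i hi u hu
    simp only [hcolAtdef]
    rw [dif_pos (hvertmem i hi u hu)]
  set β : Fin k := c ⟨μ sM, hapex⟩ with hβdef
  have hβrow : ∀ (u : V), u ∈ bagX G σ ℓ → colAt sM u ≠ β := by
    intro u hu
    rw [hcolAt sM hsMS u hu, hβdef]
    apply c.valid
    show (Rm G m).Adj ((μ sM).1, some u) (μ sM)
    rw [Rm, SimpleGraph.fromRel_adj]
    constructor
    · intro hcon
      have h2 := congrArg Prod.snd hcon
      simp [hsMnone] at h2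
    · exact Or.inr (Or.inl ⟨rfl, hsMnone⟩)
  have hrowinj : ∀ i, i ∈ S → ∀ j, j ∈ S → (μ i).1 = (μ j).1 → i = j := by
    intro i hi j hj h1
    apply μ.injective
    have h2 : (μ i).2 = (μ j).2 := by rw [hi.2, hj.2]
    exact Prod.ext h1 h2
  have hcross : ∀ i, i ∈ S → ∀ j, j ∈ S → (μ i).1 ≠ (μ j).1 →
      ∀ u u', u ∈ bagX G σ ℓ → u' ∈ bagX G σ ℓ → G.Adj u u' →
      colAt i u ≠ colAt j u' := by
    intro i hi j hj hrowne u u' hu hu' hadj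
    rw [hcolAt i hi u hu, hcolAt j hj u' hu']
    apply c.valid
    show (Rm G m).Adj ((μ i).1, some u) ((μ j).1, some u')
    rw [Rm, SimpleGraph.fromRel_adj]
    constructor
    · intro hcon
      simp only [Prod.mk.injEq] at hcon
      exact hrowne hcon.1
    · exact Or.inl (Or.inr ⟨hrowne, u, u', rfl, rfl, hadj⟩)
  set D : V → Fin k → Prop := fun u γ =>
    ∃ i, i ∈ S ∧ ∃ j, j ∈ S ∧ i ≠ j ∧ colAt i u = γ ∧ colAt j u = γ with hDdef
  have hDne : ∀ u : V, ∃ γ, D u γ := by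
    intro u
    have hcard : (Finset.univ : Finset (Fin k)).card < hSfin.toFinset.card := by
      rw [Finset.card_univ, Fintype.card_fin]
      omega
    obtain ⟨x, hx, y, hy, hxy, hfeq⟩ :=
      Finset.exists_ne_map_eq_of_card_lt_of_maps_to hcard
        (fun a _ => Finset.mem_univ (colAt a u))
    refine ⟨colAt x u, ?_⟩
    simp only [hDdef]
    exact ⟨x, hSfin.mem_toFinset.mp hx, y, hSfin.mem_toFinset.mp hy, hxy, rfl, hfeq.symm⟩
  have hL1 : ∀ u u', u ∈ bagX G σ ℓ → u' ∈ bagX G σ ℓ → G.Adj u u' →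
      ∀ γ, D u γ → D u' γ → False := by
    intro u u' hu hu' hadj γ hDu hDu'
    simp only [hDdef] at hDu hDu'
    obtain ⟨i, hi, j, hj, hij, hic, hjc⟩ := hDu
    obtain ⟨i', hi', j', hj', hij', hic', hjc'⟩ := hDu'
    by_cases hcase : (μ i).1 = (μ i').1
    · have hji' : (μ j).1 ≠ (μ i').1 := by
        intro h
        exact hij (hrowinj i hi j hj (hcase.trans h.symm))
      exact hcross j hj i' hi' hji' u u' hu hu' hadj (hjc.trans hic'.symm)
    · exact hcross i hi i' hi' hcase u u' hu hu' hadj (hic.trans hic'.symm)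
  have hL2 : ∀ u u', u ∈ bagX G σ ℓ → u' ∈ bagX G σ ℓ → G.Adj u u' →
      ∀ γ, colAt sM u = γ → D u' γ → False := by
    intro u u' hu hu' hadj γ hc0 hDu'
    simp only [hDdef] at hDu'
    obtain ⟨i, hi, j, hj, hij, hic, hjc⟩ := hDu'
    by_cases hcase : (μ sM).1 = (μ i).1
    · have h2 : (μ sM).1 ≠ (μ j).1 := fun h => hij (hrowinj i hi j hj (hcase.symm.trans h))
      exact hcross sM hsMS j hj h2 u u' hu hu' hadj (hc0.trans hjc.symm)
    · exact hcross sM hsMS i hi hcase u u' hu hu' hadj (hc0.trans hic.symm)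
  -- build a (k-1)-coloring of the bag `X_ℓ` of `G`, contradiction
  apply hnotcol
  set φ : ↥(bagX G σ ℓ) → Fin k := fun u =>
    if h : ∃ γ, γ ≠ β ∧ D u.1 γ then h.choose else colAt sM u.1 with hφdef
  have hφβ : ∀ u, φ u ≠ β := by
    intro u
    simp only [hφdef]
    split
    · next h => exact h.choose_spec.1
    · exact hβrow u.1 u.2
  have hφD : ∀ u : ↥(bagX G σ ℓ), D u.1 (φ u) ∨ (φ u = colAt sM u.1 ∧ D u.1 β) := by
    intro u
    simp only [hφdef]
    split
    · next h => exact Or.inl h.choose_spec.2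
    · next h =>
        refine Or.inr ⟨rfl, ?_⟩
        obtain ⟨γ, hγ⟩ := hDne u.1
        by_cases hgb : γ = β
        · rwa [hgb] at hγ
        · exact absurd ⟨γ, hgb, hγ⟩ h
  have hφvalid : ∀ u w : ↥(bagX G σ ℓ), (G.induce (bagX G σ ℓ)).Adj u w → φ u ≠ φ w := by
    intro u w hadj heq
    have hadj' : G.Adj u.1 w.1 := hadj
    rcases hφD u with hDu | ⟨heu, hDu⟩ <;> rcases hφD w with hDw | ⟨hew, hDw⟩
    · exact hL1 u.1 w.1 u.2 w.2 hadj' (φ u) hDu (heq ▸ hDw)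
    · exact hL2 w.1 u.1 w.2 u.2 hadj'.symm (φ u) (hew.symm.trans heq.symm) hDu
    · exact hL2 u.1 w.1 u.2 w.2 hadj' (φ w) (heu.symm.trans heq) hDw
    · exact hL1 u.1 w.1 u.2 w.2 hadj' β hDu hDw
  have hcol2 : (G.induce (bagX G σ ℓ)).Colorable (Fintype.card {γ : Fin k // γ ≠ β}) := by
    refine SimpleGraph.Coloring.colorable (SimpleGraph.Coloring.mk (fun u => ⟨φ u, hφβ u⟩) ?_)
    intro u w hadj heq
    rw [Subtype.mk.injEq] at heq
    exact hφvalid u w hadj heq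
  have hcard : Fintype.card {γ : Fin k // γ ≠ β} = k - 1 := by
    simp [Fintype.card_subtype_compl]
  rwa [hcard] at hcol2
end

section
/- For every odd integer n ≥ 5, no enumeration of the vertices of the cycle C_n is special; consequently, for all integers m ≥ n+4, the path-chromatic number of R_m(C_n) equals 3. -/
open SimpleGraph

universe u
variable {V : Type u}

/-!
For any function `f` on the vertices of a non-bipartite graph there is a path `e b w` with
`f e ≤ f b ≤ f w`: otherwise "being a strict local maximum of `f`" would be a proper
2-colouring. Applied to the positions in an enumeration of the odd cycle `C_n`, this gives a bag
of chromatic number `2 = χ_P(C_n)` whose vertex has an earlier neighbour. Applied to the bag in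
which the last copy of each vertex enters a path-decomposition of `R_m(C_n)` with 2-colourable
bags, it forces a bag containing a 5-cycle, so `χ_P(R_m(C_n)) ≥ 3`; adding all copies of `v₀` to
every bag of the standard decomposition of `C_n` gives the matching upper bound.
-/

theorem cyc_adj_iff {n : ℕ} {a b : Fin n} :
    (cyc n).Adj a b ↔ (a : ℕ) ≠ b ∧ ((b : ℕ) - a = 1 ∨ (b : ℕ) - a = n - 1 ∨
      (a : ℕ) - b = 1 ∨ (a : ℕ) - b = n - 1) := by
  simp only [cyc, fromRel_adj, ne_eq, Fin.val_inj]
  tauto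

theorem cyc_eq_cycleGraph (n : ℕ) : cyc n = cycleGraph n := by
  ext a b
  rw [cyc_adj_iff, cycleGraph_adj']
  have := a.isLt
  rcases lt_trichotomy a b with h | rfl | h
  · rw [Fin.coe_sub_iff_lt.2 h, Fin.coe_sub_iff_le.2 h.le]
    rw [Fin.lt_def] at h
    omega
  · simp [Fin.coe_sub_iff_le.2 (le_refl a)]
  · rw [Fin.coe_sub_iff_lt.2 h, Fin.coe_sub_iff_le.2 h.le]
    rw [Fin.lt_def] at h
    omega

theorem exists_adj_adj_le_le_of_not_colorable_two {α : Type*} [LinearOrder α]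
    {G : SimpleGraph V} (hG : ¬ G.Colorable 2) (f : V → α) :
    ∃ e b w, G.Adj e b ∧ G.Adj b w ∧ f e ≤ f b ∧ f b ≤ f w := by
  classical
  by_contra! h
  refine hG ⟨Coloring.mk (fun v => if ∀ u, G.Adj v u → f u < f v then 0 else 1) ?_⟩
  intro a b hab
  wlog hle : f a ≤ f b generalizing a b
  · exact (this hab.symm (le_of_not_ge hle)).symm
  have hb : ∀ u, G.Adj b u → f u < f b := fun u hbu => h a b u hab hbu hle
  have ha : ¬ ∀ u, G.Adj a u → f u < f a := fun ha => lt_asymm (hb a hab.symm) (ha b hab)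
  rw [if_neg ha, if_pos hb]
  decide

theorem not_colorable_two_cyc {n : ℕ} (hodd : Odd n) (hn : 2 ≤ n) : ¬ (cyc n).Colorable 2 := by
  intro h
  have := h.chromaticNumber_le
  rw [cyc_eq_cycleGraph, chromaticNumber_cycleGraph_of_odd n hn hodd] at this
  norm_num at this

/-- Away from the missing vertex `u`, the cycle is a path, properly coloured by the parity of
the distance from `u` in the positive direction. -/
theorem colorable_two_induce_cyc {n : ℕ} {S : Set (Fin n)} {u : Fin n} (hu : u ∉ S) :
    ((cyc n).induce S).Colorable 2 := by
  refine ⟨Coloring.mk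
    (fun x => ⟨(if u ≤ x.1 then (x.1 : ℕ) - u else (x.1 : ℕ) + n - u) % 2,
      Nat.mod_lt _ two_pos⟩) ?_⟩
  rintro ⟨x, hx⟩ ⟨y, hy⟩ hxy
  have hxu : (x : ℕ) ≠ u := fun h => hu (Fin.ext h ▸ hx)
  have hyu : (y : ℕ) ≠ u := fun h => hu (Fin.ext h ▸ hy)
  rw [induce_adj, cyc_adj_iff] at hxy
  dsimp only at hxy ⊢
  simp only [ne_eq, Fin.mk.injEq, Fin.le_def]
  have := u.isLt; have := x.isLt; have := y.isLt
  split_ifs <;> omega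

/-- `v₀` stays in every bag while an edge slides around the rest of the cycle. -/
def cycBag (n : ℕ) (t : Fin (n - 2)) : Set (Fin n) :=
  {v | (v : ℕ) = 0 ∨ (v : ℕ) = t + 1 ∨ (v : ℕ) = t + 2}

theorem isPathDecomp_cycBag {n : ℕ} (hn : 3 ≤ n) : IsPathDecomp (cyc n) (cycBag n) := by
  simp only [IsPathDecomp, cycBag, Set.mem_ofPred_eq, Fin.le_def]
  refine ⟨fun v => ?_, fun a b hab => ?_, fun v t₁ t₂ t₃ h₁₂ h₂₃ h₁ h₃ => by omega⟩
  · have := v.isLt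
    exact ⟨⟨min (v - 1) (n - 3), by omega⟩, by dsimp only; omega⟩
  · rw [cyc_adj_iff] at hab
    have := a.isLt; have := b.isLt
    exact ⟨⟨max (a : ℕ) b - 2, by omega⟩, by dsimp only; omega⟩

theorem colorable_two_induce_cycBag {n : ℕ} (hn : 4 ≤ n) (t : Fin (n - 2)) :
    ((cyc n).induce (cycBag n t)).Colorable 2 := by
  have := t.isLt
  let u : Fin n := ⟨if (t : ℕ) = 0 then (3 : ℕ) else 1, by split_ifs <;> omega⟩
  refine colorable_two_induce_cyc (u := u) ?_
  simp only [cycBag, Set.mem_ofPred_eq, u]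
  split_ifs <;> simp only [false_or, not_or] <;> omega

theorem not_colorable_one_induce_of_adj {G : SimpleGraph V} {S : Set V} {x y : V}
    (hx : x ∈ S) (hy : y ∈ S) (hxy : G.Adj x y) : ¬ (G.induce S).Colorable 1 := fun ⟨c⟩ =>
  c.valid (show (G.induce S).Adj ⟨x, hx⟩ ⟨y, hy⟩ from hxy) (Subsingleton.elim _ _)

theorem chrom_eq_two {G : SimpleGraph V} {S : Set V} {x y : V} (h : (G.induce S).Colorable 2)
    (hx : x ∈ S) (hy : y ∈ S) (hxy : G.Adj x y) : chrom G S = 2 := by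
  refine le_antisymm (Nat.sInf_le h) (le_csInf ⟨2, h⟩ fun k hk => ?_)
  by_contra! hk2
  exact not_colorable_one_induce_of_adj hx hy hxy (hk.mono (by omega))

theorem pathChromatic_le {G : SimpleGraph V} {s k : ℕ} {B : Fin s → Set V}
    (hB : IsPathDecomp G B) (hk : ∀ t, (G.induce (B t)).Colorable k) : pathChromatic G ≤ k :=
  Nat.sInf_le ⟨s, B, hB, hk⟩

theorem pathChromatic_eq_succ {G : SimpleGraph V} {s k : ℕ} {B : Fin s → Set V}
    (hB : IsPathDecomp G B) (hk : ∀ t, (G.induce (B t)).Colorable (k + 1))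
    (hlt : ∀ (s' : ℕ) (B' : Fin s' → Set V), IsPathDecomp G B' →
      ¬ ∀ t, (G.induce (B' t)).Colorable k) :
    pathChromatic G = k + 1 := by
  refine le_antisymm (pathChromatic_le hB hk) (le_csInf ⟨k + 1, s, B, hB, hk⟩ ?_)
  rintro j ⟨s', B', hB', hj⟩
  by_contra! hjk
  exact hlt s' B' hB' fun t => (hj t).mono (by omega)

theorem pathChromatic_cyc {n : ℕ} (hn : 4 ≤ n) : pathChromatic (cyc n) = 2 := by
  refine pathChromatic_eq_succ (isPathDecomp_cycBag (by omega)) (colorable_two_induce_cycBag hn)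
    fun s B hB hcol => ?_
  have hadj : (cyc n).Adj ⟨0, by omega⟩ ⟨1, by omega⟩ := by
    rw [cyc_adj_iff]
    dsimp only
    omega
  obtain ⟨t, hx, hy⟩ := hB.2.1 _ _ hadj
  exact not_colorable_one_induce_of_adj hx hy hadj (hcol t)

section Enumeration

variable {G : SimpleGraph V} {n : ℕ} (σ : Fin n ≃ V) {ℓ j : Fin n}

theorem self_mem_bagX : σ ℓ ∈ bagX G σ ℓ :=
  ⟨Or.inl ⟨ℓ, le_rfl, rfl⟩, fun ⟨_, hj, h⟩ => (σ.injective h ▸ hj).false⟩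

theorem mem_bagX_of_adj (hadj : G.Adj (σ ℓ) (σ j)) (hj : ℓ ≤ j) : σ j ∈ bagX G σ ℓ :=
  ⟨Or.inr ⟨σ ℓ, ⟨ℓ, le_rfl, rfl⟩, hadj⟩, fun ⟨_, hk, h⟩ => (σ.injective h ▸ hj).not_gt hk⟩

theorem notMem_bagX_of_lt (hj : j < ℓ) : σ j ∉ bagX G σ ℓ := fun h => h.2 ⟨j, hj, rfl⟩

end Enumeration

theorem not_isSpecial_cyc {n : ℕ} (hodd : Odd n) (hn : 5 ≤ n) (σ : Fin n ≃ Fin n) :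
    ¬ IsSpecial (cyc n) σ := by
  rintro ⟨-, hspecial⟩
  obtain ⟨e, b, w, heb, hbw, hle, hlw⟩ :=
    exists_adj_adj_le_le_of_not_colorable_two (not_colorable_two_cyc hodd (by omega)) σ.symm
  have hei : σ.symm e < σ.symm b := hle.lt_of_ne (σ.symm.injective.ne heb.ne)
  set X := bagX (cyc n) σ (σ.symm b)
  have hb : b ∈ X := by simpa using self_mem_bagX (ℓ := σ.symm b) σ
  have hw : w ∈ X := by simpa using mem_bagX_of_adj σ (by simpa) hlw
  have he : e ∉ X := by simpa using notMem_bagX_of_lt σ hei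
  have hchrom := chrom_eq_two (colorable_two_induce_cyc he) hb hw hbw
  exact hspecial _ (by rw [hchrom, pathChromatic_cyc (by omega)]) _ hei (by simpa using heb)

section Rm

variable {G : SimpleGraph V} {m : ℕ} {i j : Fin m} {u v : V}

@[simp]
theorem Rm_adj_none_none : ¬ (Rm G m).Adj (i, none) (j, none) := by
  simp only [Rm, fromRel_adj]
  tauto

@[simp]
theorem Rm_adj_none_some : (Rm G m).Adj (i, none) (j, some v) ↔ i = j := by
  simp [Rm, eq_comm]

@[simp]
theorem Rm_adj_some_some : (Rm G m).Adj (i, some u) (j, some v) ↔ i ≠ j ∧ G.Adj u v := by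
  simp only [Rm, fromRel_adj, ne_eq, Prod.mk.injEq, Option.some.injEq, reduceCtorEq,
    and_false, false_or, exists_and_left, exists_eq_left']
  rw [G.adj_comm v u, eq_comm (a := j)]
  tauto

def RmBag (m : ℕ) (B : Set V) : Set (Fin m × Option V) :=
  {p | ∀ v ∈ p.2, v ∈ B}

variable {B : Set V}

@[simp]
theorem mk_none_mem_RmBag : (i, none) ∈ RmBag m B := by
  simp [RmBag]

@[simp]
theorem mk_some_mem_RmBag : (i, some v) ∈ RmBag m B ↔ v ∈ B := by
  simp [RmBag]

theorem IsPathDecomp.Rm {s : ℕ} {B : Fin s → Set V} (hB : IsPathDecomp G B) (hs : 0 < s) :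
    IsPathDecomp (Rm G m) fun t => RmBag m (B t) := by
  refine ⟨?_, ?_, ?_⟩
  · rintro ⟨i, _ | v⟩
    · exact ⟨⟨0, hs⟩, by simp⟩
    · simpa using hB.1 v
  · rintro ⟨i, _ | u⟩ ⟨j, _ | v⟩ hpq
    · simp at hpq
    · simpa using hB.1 v
    · simpa using hB.1 u
    · simpa using hB.2.1 u v (Rm_adj_some_some.1 hpq).2
  · rintro ⟨i, _ | v⟩ t₁ t₂ t₃ h₁₂ h₂₃ h₁ h₃
    · simp
    · simp only [mk_some_mem_RmBag] at h₁ h₃ ⊢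
      exact hB.2.2 v t₁ t₂ t₃ h₁₂ h₂₃ h₁ h₃

/-- Colour the copies of `v₀` with a new colour and every copy of `v` with the colour of `v`. -/
theorem colorable_succ_induce_RmBag {k : ℕ} (h : (G.induce B).Colorable k) :
    ((Rm G m).induce (RmBag m B)).Colorable (k + 1) := by
  classical
  obtain ⟨c⟩ := h
  let f : V → Fin (k + 1) := fun v => if hv : v ∈ B then (c ⟨v, hv⟩).castSucc else 0
  refine ⟨Coloring.mk (fun p => p.1.2.elim (Fin.last k) f) ?_⟩
  rintro ⟨⟨i, _ | u⟩, hp⟩ ⟨⟨j, _ | v⟩, hq⟩ hpq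
  all_goals simp only [induce_adj, mk_some_mem_RmBag] at hp hq hpq
  · simp at hpq
  · simpa [f, hq] using (Fin.castSucc_lt_last _).ne'
  · simp [f, hp]
  · simpa [f, hp, hq] using c.valid (show (G.induce B).Adj ⟨u, hp⟩ ⟨v, hq⟩ from
      (Rm_adj_some_some.1 hpq).2)

end Rm

namespace IsPathDecomp

variable {G : SimpleGraph V} {s : ℕ} {B : Fin s → Set V} (hB : IsPathDecomp G B)

open Classical in
noncomputable def first (v : V) : Fin s :=
  (Finset.univ.filter (v ∈ B ·)).min' (by simpa [Finset.Nonempty] using hB.1 v)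

open Classical in
noncomputable def last (v : V) : Fin s :=
  (Finset.univ.filter (v ∈ B ·)).max' (by simpa [Finset.Nonempty] using hB.1 v)

open Classical in
theorem first_mem (v : V) : v ∈ B (hB.first v) :=
  (Finset.mem_filter.1 (Finset.min'_mem (Finset.univ.filter (v ∈ B ·)) _)).2

open Classical in
theorem last_mem (v : V) : v ∈ B (hB.last v) :=
  (Finset.mem_filter.1 (Finset.max'_mem (Finset.univ.filter (v ∈ B ·)) _)).2

open Classical in
theorem mem_iff {v : V} {t : Fin s} : v ∈ B t ↔ hB.first v ≤ t ∧ t ≤ hB.last v :=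
  ⟨fun h => ⟨Finset.min'_le _ _ (Finset.mem_filter.2 ⟨Finset.mem_univ t, h⟩),
      Finset.le_max' _ _ (Finset.mem_filter.2 ⟨Finset.mem_univ t, h⟩)⟩,
    fun ⟨h₁, h₂⟩ => hB.2.2 v _ t _ h₁ h₂ (hB.first_mem v) (hB.last_mem v)⟩

theorem first_le_last_of_adj {u v : V} (h : G.Adj u v) : hB.first u ≤ hB.last v := by
  obtain ⟨t, hu, hv⟩ := hB.2.1 u v h
  exact (hB.mem_iff.1 hu).1.trans (hB.mem_iff.1 hv).2

end IsPathDecomp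

section RmLowerBound

variable {G : SimpleGraph V} {m : ℕ} {e b : V}

theorem not_colorable_two_of_five_cycle {X : Set (Fin m × Option V)} (heb : G.Adj e b)
    {i j k : Fin m} (hij : i ≠ j) (hik : i ≠ k) (hjk : j ≠ k) (h₀ : (i, none) ∈ X)
    (h₁ : (i, some e) ∈ X) (h₂ : (j, some b) ∈ X) (h₃ : (k, some e) ∈ X)
    (h₄ : (i, some b) ∈ X) : ¬ ((Rm G m).induce X).Colorable 2 := by
  intro hX
  have adj {p q} (hp : p ∈ X) (hq : q ∈ X) (h : (Rm G m).Adj p q) :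
      ((Rm G m).induce X).Adj ⟨p, hp⟩ ⟨q, hq⟩ := h
  let c : ((Rm G m).induce X).Walk ⟨_, h₀⟩ ⟨_, h₀⟩ :=
    .cons (adj h₀ h₁ (Rm_adj_none_some.2 rfl)) <|
    .cons (adj h₁ h₂ (Rm_adj_some_some.2 ⟨hij, heb⟩)) <|
    .cons (adj h₂ h₃ (Rm_adj_some_some.2 ⟨hjk, heb.symm⟩)) <|
    .cons (adj h₃ h₄ (Rm_adj_some_some.2 ⟨hik.symm, heb⟩)) <|
    .cons (adj h₄ h₀ (Rm_adj_none_some.2 rfl).symm) .nil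
  have h3 := c.three_le_chromaticNumber_of_odd_loop ⟨2, rfl⟩
  have h2 := hX.chromaticNumber_le
  exact absurd (h3.trans h2) (by norm_num)

theorem card_le_two_of_forall_mem {X : Set (Fin m × Option V)}
    (hX : ((Rm G m).induce X).Colorable 2) (heb : G.Adj e b) {S : Finset (Fin m)}
    (hS : ∀ j ∈ S, (j, some e) ∈ X ∧ (j, some b) ∈ X) {i : Fin m} (hi : i ∈ S)
    (h₀ : (i, none) ∈ X) : S.card ≤ 2 := by
  by_contra! hcard
  obtain ⟨j, hj, k, hk, hjk⟩ := Finset.one_lt_card.1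
    (by rw [Finset.card_erase_of_mem hi]; omega : 1 < (S.erase i).card)
  exact not_colorable_two_of_five_cycle heb (Finset.ne_of_mem_erase hj).symm
    (Finset.ne_of_mem_erase hk).symm hjk h₀ (hS i hi).1
    (hS j (Finset.mem_of_mem_erase hj)).2 (hS k (Finset.mem_of_mem_erase hk)).1 (hS i hi).2 hX

variable {s : ℕ} {W : Fin s → Set (Fin m × Option V)} (hW : IsPathDecomp (Rm G m) W)

/-- All columns whose `v₀` enters after `T` meet in the bag where the first of them enters. -/
theorem card_le_two_of_lt_first (hcol : ∀ t, ((Rm G m).induce (W t)).Colorable 2)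
    (heb : G.Adj e b) {T : Fin s} {S : Finset (Fin m)}
    (hS : ∀ j ∈ S, (j, some e) ∈ W T ∧ (j, some b) ∈ W T ∧ T < hW.first (j, none)) :
    S.card ≤ 2 := by
  rcases S.eq_empty_or_nonempty with rfl | hne
  · simp
  obtain ⟨i, hi, hmin⟩ := S.exists_min_image (fun j => hW.first (j, none)) hne
  refine card_le_two_of_forall_mem (hcol _) heb (fun j hj => ?_) hi (hW.first_mem _)
  obtain ⟨he, hb, -⟩ := hS j hj
  have later {x : V} (hx : (j, some x) ∈ W T) : (j, some x) ∈ W (hW.first (i, none)) :=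
    hW.mem_iff.2 ⟨(hW.mem_iff.1 hx).1.trans (hS i hi).2.2.le,
      (hmin j hj).trans (hW.first_le_last_of_adj (Rm_adj_none_some.2 rfl))⟩
  exact ⟨later he, later hb⟩

/-- All columns whose `v₀` leaves before `T` meet in the bag where the last of them leaves. -/
theorem card_le_two_of_last_lt (hcol : ∀ t, ((Rm G m).induce (W t)).Colorable 2)
    (heb : G.Adj e b) {T : Fin s} {S : Finset (Fin m)}
    (hS : ∀ j ∈ S, (j, some e) ∈ W T ∧ (j, some b) ∈ W T ∧ hW.last (j, none) < T) :
    S.card ≤ 2 := by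
  rcases S.eq_empty_or_nonempty with rfl | hne
  · simp
  obtain ⟨i, hi, hmax⟩ := S.exists_max_image (fun j => hW.last (j, none)) hne
  refine card_le_two_of_forall_mem (hcol _) heb (fun j hj => ?_) hi (hW.last_mem _)
  obtain ⟨he, hb, -⟩ := hS j hj
  have earlier {x : V} (hx : (j, some x) ∈ W T) : (j, some x) ∈ W (hW.last (i, none)) :=
    hW.mem_iff.2 ⟨(hW.first_le_last_of_adj (Rm_adj_none_some.2 rfl).symm).trans (hmax j hj),
      (hS i hi).2.2.le.trans (hW.mem_iff.1 hx).2⟩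
  exact ⟨earlier he, earlier hb⟩

/-- Let `z u` be the bag where the last copy of `u` enters and pick `e ~ b ~ w` with
`z e ≤ z b ≤ z w`. Every column other than the one where `b` enters last and the one where `w`
enters last carries its copies of `e` and `b` through the bag `T = z b`; so its `v₀` lies before
`T`, in `T` or after `T`, and each of these three groups has at most two columns. -/
theorem not_forall_colorable_two_Rm (hG : ¬ G.Colorable 2) (hm : 9 ≤ m)
    (hW : IsPathDecomp (Rm G m) W) : ¬ ∀ t, ((Rm G m).induce (W t)).Colorable 2 := by
  classical
  intro hcol
  have hm₀ : (Finset.univ : Finset (Fin m)).Nonempty := ⟨⟨0, by omega⟩, Finset.mem_univ _⟩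
  let z (u : V) : Fin s := Finset.univ.sup' hm₀ fun i => hW.first (i, some u)
  have first_le_z (i : Fin m) (u : V) : hW.first (i, some u) ≤ z u :=
    Finset.le_sup' (fun i => hW.first (i, some u)) (Finset.mem_univ i)
  obtain ⟨e, b, w, heb, hbw, hze, hzw⟩ := exists_adj_adj_le_le_of_not_colorable_two hG z
  obtain ⟨i₁, -, hi₁⟩ : ∃ i ∈ Finset.univ, z b = hW.first (i, some b) :=
    Finset.exists_mem_eq_sup' hm₀ _
  obtain ⟨i₂, -, hi₂⟩ : ∃ i ∈ Finset.univ, z w = hW.first (i, some w) :=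
    Finset.exists_mem_eq_sup' hm₀ _
  set T := z b
  set S : Finset (Fin m) := {i₁, i₂}ᶜ
  have hS : ∀ j ∈ S, (j, some e) ∈ W T ∧ (j, some b) ∈ W T := by
    intro j hj
    simp only [S, Finset.mem_compl, Finset.mem_insert, Finset.mem_singleton, not_or] at hj
    refine ⟨hW.mem_iff.2 ⟨(first_le_z j e).trans hze, ?_⟩, hW.mem_iff.2 ⟨first_le_z j b, ?_⟩⟩
    · exact hi₁.le.trans <|
        hW.first_le_last_of_adj (Rm_adj_some_some.2 ⟨Ne.symm hj.1, heb.symm⟩)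
    · exact hzw.trans <| hi₂.le.trans <|
        hW.first_le_last_of_adj (Rm_adj_some_some.2 ⟨Ne.symm hj.2, hbw.symm⟩)
  set past := S.filter fun j => hW.last (j, none) < T
  set now := S.filter fun j => (j, none) ∈ W T
  set future := S.filter fun j => T < hW.first (j, none)
  have hpast : past.card ≤ 2 := card_le_two_of_last_lt hW hcol heb fun j hj => by
    obtain ⟨hj, hlt⟩ := Finset.mem_filter.1 hj
    exact ⟨(hS j hj).1, (hS j hj).2, hlt⟩
  have hfuture : future.card ≤ 2 := card_le_two_of_lt_first hW hcol heb fun j hj => by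
    obtain ⟨hj, hlt⟩ := Finset.mem_filter.1 hj
    exact ⟨(hS j hj).1, (hS j hj).2, hlt⟩
  have hnow : now.card ≤ 2 := by
    rcases now.eq_empty_or_nonempty with h | ⟨i, hi⟩
    · simp [h]
    exact card_le_two_of_forall_mem (hcol T) heb (fun j hj => hS j (Finset.mem_filter.1 hj).1)
      hi (Finset.mem_filter.1 hi).2
  have hsplit : S ⊆ past ∪ now ∪ future := by
    intro j hj
    rcases lt_or_ge (hW.last (j, none)) T with h₁ | h₁
    · simp [past, hj, h₁]
    rcases le_or_gt (hW.first (j, none)) T with h₂ | h₂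
    · simp [now, hj, hW.mem_iff, h₁, h₂]
    · simp [future, hj, h₂]
  have hS_card : m - 2 ≤ S.card := by
    rw [Finset.card_compl, Fintype.card_fin]
    have := Finset.card_le_two (a := i₁) (b := i₂)
    omega
  have := (Finset.card_le_card hsplit).trans
    ((Finset.card_union_le _ _).trans (add_le_add_left (Finset.card_union_le _ _) _))
  omega

end RmLowerBound

/-- Lemma 4: for odd `n ≥ 5`, no enumeration of `C_n` is special; consequently for all
`m ≥ n + 4`, `χ_P(R_m(C_n)) = 3`. -/
theorem stmt_12 (n : ℕ) (hodd : Odd n) (hn : 5 ≤ n) :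
    (∀ σ : Fin n ≃ Fin n, ¬ IsSpecial (cyc n) σ) ∧
    ∀ m : ℕ, n + 4 ≤ m → pathChromatic (Rm (cyc n) m) = 3 := by
  refine ⟨not_isSpecial_cyc hodd hn, fun m hm => ?_⟩
  exact pathChromatic_eq_succ ((isPathDecomp_cycBag (by omega)).Rm (by omega))
    (fun t => colorable_succ_induce_RmBag (colorable_two_induce_cycBag (by omega) t))
    fun _ _ hW => not_forall_colorable_two_Rm (not_colorable_two_cyc hodd (by omega)) (by omega) hW
end

section
/- Let (P, B) = B_1,...,B_s be a path-decomposition of a graph G, and let σ = v_1,...,v_n be an enumeration of V(G) such that whenever the last bag containing u precedes the last bag containing v, u precedes v in σ. Then for each i ∈ [n], the bag X_i = N[{v_1,...,v_i}] \ {v_1,...,v_{i-1}} is contained in the last bag of (P, B) containing v_i; consequently the chromatic number of P_σ^G is at most that of (P, B). -/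
open SimpleGraph

universe u
variable {V : Type u}

/-! A vertex `w ∈ X_i` other than `v_i` is a neighbour of some `v_j` with `j < i` and is not
among `v_1, …, v_{i-1}`. By the choice of `σ`, the last bag of `v_j` comes no later than the last
bag `t` of `v_i`, and the last bag of `w` no earlier. As `v_j` and `w` share a bag, which precedes
the last bag of `v_j`, and the bags containing `w` form an interval, `w ∈ B t`. -/

theorem Set.Finite.exists_isGreatest {ι : Type*} [LinearOrder ι] {S : Set ι} (hS : S.Finite)
    (hne : S.Nonempty) : ∃ t, IsGreatest S t :=
  ⟨_, by simpa using hS.toFinset.isGreatest_max' (by simpa using hne)⟩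

theorem SimpleGraph.colorable_of_equiv_fin {n : ℕ} (G : SimpleGraph V) (σ : Fin n ≃ V) :
    G.Colorable n :=
  ⟨Coloring.mk σ.symm fun h heq => h.ne (σ.symm.injective heq)⟩

namespace IsPathDecomp

variable {G : SimpleGraph V} {s : ℕ} {B : Fin s → Set V}

theorem exists_isGreatest_bag (hB : IsPathDecomp G B) (v : V) :
    ∃ t, IsGreatest {t | v ∈ B t} t :=
  (Set.toFinite _).exists_isGreatest (hB.1 v)

theorem mem_of_adj (hB : IsPathDecomp G B) {u w : V} {tu tw t : Fin s} (huw : G.Adj u w)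
    (htu : tu ∈ upperBounds {t | u ∈ B t}) (hw : w ∈ B tw) (h₁ : tu ≤ t) (h₂ : t ≤ tw) :
    w ∈ B t :=
  let ⟨t', hu', hw'⟩ := hB.2.1 u w huw
  hB.2.2 w t' t tw ((htu hu').trans h₁) h₂ hw' hw

end IsPathDecomp

section LastBagOrder

variable {G : SimpleGraph V} {s n : ℕ} {B : Fin s → Set V} {σ : Fin n ≃ V}

theorem lastBag_le_of_symm_le
    (horder : ∀ (u v : V) (tu tv : Fin s),
      (u ∈ B tu ∧ ∀ t, u ∈ B t → t ≤ tu) →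
      (v ∈ B tv ∧ ∀ t, v ∈ B t → t ≤ tv) →
      tu < tv → σ.symm u < σ.symm v)
    {u v : V} {tu tv : Fin s} (hu : IsGreatest {t | u ∈ B t} tu)
    (hv : IsGreatest {t | v ∈ B t} tv) (h : σ.symm v ≤ σ.symm u) : tv ≤ tu :=
  not_lt.1 fun hlt => (horder u v tu tv hu hv hlt).not_ge h

theorem bagX_subset_of_isGreatest (hB : IsPathDecomp G B)
    (horder : ∀ (u v : V) (tu tv : Fin s),
      (u ∈ B tu ∧ ∀ t, u ∈ B t → t ≤ tu) →
      (v ∈ B tv ∧ ∀ t, v ∈ B t → t ≤ tv) →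
      tu < tv → σ.symm u < σ.symm v)
    {i : Fin n} {t : Fin s} (ht : IsGreatest {t | σ i ∈ B t} t) : bagX G σ i ⊆ B t := by
  rintro w ⟨⟨j, hji, rfl⟩ | ⟨u, ⟨j, hji, rfl⟩, hadj⟩, hnew⟩
  · obtain rfl : j = i := hji.eq_of_not_lt fun hlt => hnew ⟨j, hlt, rfl⟩
    exact ht.1
  · obtain ⟨tu, htu⟩ := hB.exists_isGreatest_bag (σ j)
    obtain ⟨tw, htw⟩ := hB.exists_isGreatest_bag w
    have hiw : i ≤ σ.symm w := not_lt.1 fun hlt => hnew ⟨_, hlt, (σ.apply_symm_apply w).symm⟩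
    refine hB.mem_of_adj hadj htu.2 htw.1 ?_ ?_
    · exact lastBag_le_of_symm_le horder ht htu (by simpa using hji)
    · exact lastBag_le_of_symm_le horder htw ht (by simpa using hiw)

end LastBagOrder

theorem decompChrom_le_of_forall_subset {ι : Type*} {G : SimpleGraph V} {n : ℕ}
    (σ : Fin n ≃ V) (B : ι → Set V) (hsub : ∀ i, ∃ t, bagX G σ i ⊆ B t) :
    decompChrom G σ ≤ sInf {k | ∀ t, (G.induce (B t)).Colorable k} := by
  have hne : {k | ∀ t, (G.induce (B t)).Colorable k}.Nonempty :=
    ⟨n, fun t => (G.colorable_of_equiv_fin σ).of_hom (Embedding.induce (B t)).toHom⟩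
  refine Nat.sInf_le fun i => ?_
  obtain ⟨t, hit⟩ := hsub i
  exact (Nat.sInf_mem hne t).of_hom (G.induceHomOfLE hit).toHom

/-- Proof of Lemma 1: if `σ` orders the vertices compatibly with the order of their last
bags in a path-decomposition `B`, then each `X_i` is contained in the last bag containing
`v_i`; consequently the chromatic number of `P_σ^G` is at most that of `B`. -/
theorem stmt_18 {V : Type u} (G : SimpleGraph V) {s n : ℕ}
    (B : Fin s → Set V) (hB : IsPathDecomp G B) (σ : Fin n ≃ V)
    (horder : ∀ (u v : V) (tu tv : Fin s),
      (u ∈ B tu ∧ ∀ t, u ∈ B t → t ≤ tu) →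
      (v ∈ B tv ∧ ∀ t, v ∈ B t → t ≤ tv) →
      tu < tv → σ.symm u < σ.symm v) :
    (∀ i : Fin n, ∃ t : Fin s,
      (σ i ∈ B t ∧ ∀ t', σ i ∈ B t' → t' ≤ t) ∧ bagX G σ i ⊆ B t) ∧
    decompChrom G σ ≤ sInf {k | ∀ t, (G.induce (B t)).Colorable k} := by
  have hlast : ∀ i, ∃ t, IsGreatest {t | σ i ∈ B t} t ∧ bagX G σ i ⊆ B t := fun i =>
    let ⟨t, ht⟩ := hB.exists_isGreatest_bag (σ i)
    ⟨t, ht, bagX_subset_of_isGreatest hB horder ht⟩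
  exact ⟨hlast, decompChrom_le_of_forall_subset σ B fun i => (hlast i).imp fun _ => And.right⟩
end

section
/- Let G be a graph on n vertices with an enumeration σ = v_1,...,v_n such that the path-decomposition P_σ^G = X_1,...,X_n has chromatic number k. Let μ be the enumeration of V(R_m(G)) given by (1,v_1),...,(m,v_1),(1,v_2),...,(m,v_n),(1,v_0),...,(m,v_0). Then for all i ∈ [m] and j ∈ [n], the bag Y_{(i,v_j)} of P_μ^{R_m(G)} satisfies χ(⟨Y_{(i,v_j)}⟩) ≤ χ(G[X_j]) + 1; consequently the chromatic number of P_μ^{R_m(G)} is at most k+1. -/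
open SimpleGraph

universe u
variable {V : Type u}

/-! The bag of `μ` at a position in the `j`-th block (the copies of `v_j`) contains only apex
copies `(i, v₀)` and copies `(i, w)` of vertices `w ∈ X_j`: a non-apex neighbour of an earlier
vertex `(i', u)` is a copy of a `G`-neighbour of `u`, and a vertex not enumerated yet lies in a
block `≥ j`. Such a set is coloured by giving `(i, w)` the colour of `w` in a colouring of
`G[X_j]` and every apex copy one new colour, since adjacent non-apex copies come from adjacent
vertices of `G` and apex copies are pairwise non-adjacent. Bags after the last block consist of
apex copies only. -/

theorem mem_bagX_iff {n : ℕ} {G : SimpleGraph V} {σ : Fin n ≃ V} {ℓ : Fin n} {v : V} :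
    v ∈ bagX G σ ℓ ↔ ℓ ≤ σ.symm v ∧ (σ.symm v = ℓ ∨ ∃ u, σ.symm u ≤ ℓ ∧ G.Adj u v) := by
  simp only [bagX, closedNbhd, Set.mem_sdiff, Set.mem_union, Set.mem_ofPred_eq,
    ← Equiv.symm_apply_eq, existsAndEq, and_true, not_lt]
  grind

theorem chrom_colorable [Finite V] (G : SimpleGraph V) (S : Set V) :
    (G.induce S).Colorable (chrom G S) := by
  have := Fintype.ofFinite S
  exact Nat.sInf_mem (s := {k | (G.induce S).Colorable k}) ⟨_, (G.induce S).colorable_of_fintype⟩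

theorem decompChrom_colorable {n : ℕ} (G : SimpleGraph V) (σ : Fin n ≃ V) (ℓ : Fin n) :
    (G.induce (bagX G σ ℓ)).Colorable (decompChrom G σ) := by
  have := Fintype.ofEquiv _ σ
  refine Nat.sInf_mem (s := {k | ∀ ℓ, (G.induce (bagX G σ ℓ)).Colorable k})
    ⟨_, fun ℓ => G.colorable_of_fintype.of_hom (Embedding.induce _).toHom⟩ ℓ

theorem SimpleGraph.Colorable.induce_of_subset {G : SimpleGraph V} {S T : Set V} {K : ℕ}
    (hST : S ⊆ T) (hT : (G.induce T).Colorable K) : (G.induce S).Colorable K :=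
  hT.of_hom (G.induceHomOfLE hST).toHom

namespace Rm

variable {G : SimpleGraph V} {m : ℕ}

theorem adj_some_some {i i' : Fin m} {u v : V} :
    (Rm G m).Adj (i, some u) (i', some v) ↔ i ≠ i' ∧ G.Adj u v := by
  simp only [Rm, fromRel_adj, ne_eq, Prod.mk.injEq, Option.some.injEq, reduceCtorEq, and_false,
    exists_and_left, exists_eq_left', false_or, G.adj_comm v u]
  grind

theorem not_adj_none_none {i i' : Fin m} : ¬ (Rm G m).Adj (i, none) (i', none) := by
  simp [Rm]
  grind

/-- `{p | ∀ w ∈ p.2, w ∈ X}` consists of the apex copies `(i, none)` and the copies of `X`. -/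
theorem colorable_induce {X : Set V} {K : ℕ} (hX : (G.induce X).Colorable K) :
    ((Rm G m).induce {p | ∀ w ∈ p.2, w ∈ X}).Colorable (K + 1) := by
  obtain ⟨C⟩ := hX
  let C' : ((Rm G m).induce {p | ∀ w ∈ p.2, w ∈ X}).Coloring (Option (Fin K)) :=
    Coloring.mk (fun p => p.1.2.pmap (fun w hw => C ⟨w, hw⟩) p.2) <| by
      rintro ⟨⟨i, _ | u⟩, hp⟩ ⟨⟨i', _ | v⟩, hq⟩ hadj
      · exact absurd hadj not_adj_none_none
      · simp
      · simp
      · have hadj' : (G.induce X).Adj ⟨u, hp u rfl⟩ ⟨v, hq v rfl⟩ := (adj_some_some.1 hadj).2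
        simpa using C.valid hadj'
  simpa using C'.colorable

end Rm

def IsBlockEnumeration {n m N : ℕ} (σ : Fin n ≃ V) (μ : Fin N ≃ Fin m × Option V) : Prop :=
  ∀ ℓ : Fin N, (μ ℓ).2 = if h : ↑ℓ / m < n then some (σ ⟨↑ℓ / m, h⟩) else none

namespace IsBlockEnumeration

variable {G : SimpleGraph V} {n m N : ℕ} {σ : Fin n ≃ V} {μ : Fin N ≃ Fin m × Option V}

theorem snd_eq_some_iff (hμ : IsBlockEnumeration σ μ) {ℓ : Fin N} {w : V} :
    (μ ℓ).2 = some w ↔ ↑ℓ / m = σ.symm w := by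
  rw [hμ ℓ]
  split_ifs with h
  · simp [← Equiv.eq_symm_apply, Fin.ext_iff]
  · simp only [false_iff]
    omega

theorem snd_eq_none_iff (hμ : IsBlockEnumeration σ μ) {ℓ : Fin N} :
    (μ ℓ).2 = none ↔ n ≤ ↑ℓ / m := by
  rw [hμ ℓ]
  split_ifs with h <;> simp <;> omega

theorem symm_some_div (hμ : IsBlockEnumeration σ μ) (i : Fin m) (w : V) :
    ↑(μ.symm (i, some w)) / m = σ.symm w :=
  hμ.snd_eq_some_iff.1 (by simp)

theorem bagX_subset (hμ : IsBlockEnumeration σ μ) {ℓ : Fin N} {j : Fin n} (hj : ↑ℓ / m = j) :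
    bagX (Rm G m) μ ℓ ⊆ {p | ∀ w ∈ p.2, w ∈ bagX G σ j} := by
  rintro ⟨i, _ | w⟩ hp w' hw'
  · cases hw'
  obtain rfl : w = w' := Option.some_inj.1 hw'
  have hpos := hμ.symm_some_div i w
  obtain ⟨hle, hp⟩ := mem_bagX_iff.1 hp
  have hle := Nat.div_le_div_right (c := m) (Fin.le_def.1 hle)
  refine mem_bagX_iff.2 ⟨Fin.le_def.2 (by omega), ?_⟩
  obtain hself | ⟨⟨i', _ | u⟩, hq, hadj⟩ := hp
  · exact .inl (Fin.ext (by rw [← hpos, hself, hj]))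
  · have hnone := hμ.snd_eq_none_iff.1 (by simp : (μ (μ.symm (i', none))).2 = none)
    have := Nat.div_le_div_right (c := m) (Fin.le_def.1 hq)
    omega
  · have hposu := hμ.symm_some_div i' u
    have := Nat.div_le_div_right (c := m) (Fin.le_def.1 hq)
    exact .inr ⟨u, Fin.le_def.2 (by omega), (Rm.adj_some_some.1 hadj).2⟩

theorem bagX_subset_of_le (hμ : IsBlockEnumeration σ μ) {ℓ : Fin N} (hℓ : n ≤ ↑ℓ / m) :
    bagX (Rm G m) μ ℓ ⊆ {p | ∀ w ∈ p.2, w ∈ (∅ : Set V)} := by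
  rintro ⟨i, _ | w⟩ hp w' hw'
  · cases hw'
  have hpos := hμ.symm_some_div i w
  have hle : ↑ℓ / m ≤ ↑(μ.symm (i, some w)) / m := Nat.div_le_div_right (mem_bagX_iff.1 hp).1
  omega

end IsBlockEnumeration

theorem stmt_19_general {V : Type u} (G : SimpleGraph V) {n m k : ℕ}
    (hm : 0 < m) (σ : Fin n ≃ V)
    (hk : decompChrom G σ = k)
    (μ : Fin (m * (n + 1)) ≃ (Fin m × Option V))
    (hμ : ∀ ℓ : Fin (m * (n + 1)), μ ℓ =
      (⟨(ℓ : ℕ) % m, Nat.mod_lt _ hm⟩,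
        if h : (ℓ : ℕ) < n * m then
          some (σ ⟨(ℓ : ℕ) / m, Nat.div_lt_of_lt_mul (Nat.mul_comm n m ▸ h)⟩) else none)) :
    (∀ (i : Fin m) (j : Fin n),
      chrom (Rm G m) (bagX (Rm G m) μ (μ.symm (i, some (σ j)))) ≤
        chrom G (bagX G σ j) + 1) ∧
    decompChrom (Rm G m) μ ≤ k + 1 := by
  have : Finite V := .of_equiv _ σ
  have hblock : IsBlockEnumeration σ μ := fun ℓ => by
    by_cases h : ↑ℓ / m < n
    · rw [hμ, dif_pos h, dif_pos ((Nat.div_lt_iff_lt_mul hm).1 h)]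
    · rw [hμ, dif_neg h, dif_neg (mt (Nat.div_lt_iff_lt_mul hm).2 h)]
  refine ⟨fun i j => Nat.sInf_le ?_, Nat.sInf_le fun ℓ => ?_⟩
  · have hj : ↑(μ.symm (i, some (σ j))) / m = j := by simpa using hblock.symm_some_div i (σ j)
    exact (Rm.colorable_induce (chrom_colorable G _)).induce_of_subset (hblock.bagX_subset hj)
  · subst hk
    by_cases h : ↑ℓ / m < n
    · exact (Rm.colorable_induce (decompChrom_colorable G σ ⟨_, h⟩)).induce_of_subset
        (hblock.bagX_subset rfl)
    · exact (Rm.colorable_induce (.of_isEmpty _)).induce_of_subset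
        (hblock.bagX_subset_of_le (not_lt.1 h))

/-- Claims 2 and 3 in the proof of Theorem 2: with `μ` the enumeration
`(1,v₁),…,(m,v₁),…,(1,vₙ),…,(m,vₙ),(1,v₀),…,(m,v₀)` of `R_m(G)`, each bag `Y_{(i,v_j)}`
satisfies `χ(⟨Y_{(i,v_j)}⟩) ≤ χ(X_j) + 1`, and hence `P_μ^{R_m(G)}` has chromatic number
at most `k + 1`. -/
theorem stmt_19 {V : Type u} [Fintype V] (G : SimpleGraph V) {n m k : ℕ}
    (hn : Fintype.card V = n) (hm : 0 < m) (σ : Fin n ≃ V)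
    (hk : decompChrom G σ = k)
    (μ : Fin (m * (n + 1)) ≃ (Fin m × Option V))
    (hμ : ∀ ℓ : Fin (m * (n + 1)), μ ℓ =
      (⟨(ℓ : ℕ) % m, Nat.mod_lt _ hm⟩,
        if h : (ℓ : ℕ) < n * m then
          some (σ ⟨(ℓ : ℕ) / m, Nat.div_lt_of_lt_mul (Nat.mul_comm n m ▸ h)⟩) else none)) :
    (∀ (i : Fin m) (j : Fin n),
      chrom (Rm G m) (bagX (Rm G m) μ (μ.symm (i, some (σ j)))) ≤
        chrom G (bagX G σ j) + 1) ∧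
    decompChrom (Rm G m) μ ≤ k + 1 :=
  stmt_19_general G hm σ hk μ hμ
end
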